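/- arXiv:0710.2071 — 4 statements merged into one kernel-verified Lean document; each statement's English description precedes it below -/
import Mathlib

section
/- Let S be an isometry on a separable Hilbert space K, let (K_∞, {U_n}) be the direct limit of the system K →S→ K →S→ ···, and let S_∞ be the unitary on K_∞ determined by S_∞(U_{n+1} h) = U_n h. Define V_n := U_n(K) for n ≥ 0 and V_n := S_∞^{|n|}(V_0) for n < 0. Then ⋂_{n∈ℤ} V_n = {0} if and only if S is a pure isometry, i.e., ⋂_{k≥1} S^k(K) = {0}. -/
/-!
`S∞^k` carries `U₀ h` to `U₀ (S^k h)`, so `V_{-k} = U₀ (S^k K)`, while `V_n ⊇ V₀`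
for `n ≥ 0`. Hence `⋂ₙ Vₙ = U₀ (⋂ₖ S^k K)`, and the isometry `U₀` is injective.
-/

open TopologicalSpace Set Function

section DirectSystem

variable {α β : Type*} {S : α → α} {U : ℕ → α → β} {T : β → β}

theorem apply_zero_eq_apply_iterate (hU : ∀ n h, U (n + 1) (S h) = U n h) (k : ℕ) (h : α) :
    U 0 h = U k (S^[k] h) := by
  induction k with
  | zero => rfl
  | succ k ih => rw [iterate_succ_apply', hU, ih]

theorem iterate_apply_apply_self (hT : ∀ n h, T (U (n + 1) h) = U n h) (k : ℕ) (h : α) :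
    T^[k] (U k h) = U 0 h := by
  induction k with
  | zero => rfl
  | succ k ih => rw [iterate_succ_apply, hT, ih]

theorem range_zero_subset_range (hU : ∀ n h, U (n + 1) (S h) = U n h) (n : ℕ) :
    range (U 0) ⊆ range (U n) := by
  rintro _ ⟨h, rfl⟩
  exact ⟨S^[n] h, (apply_zero_eq_apply_iterate hU n h).symm⟩

theorem image_iterate_range_zero (hU : ∀ n h, U (n + 1) (S h) = U n h)
    (hT : ∀ n h, T (U (n + 1) h) = U n h) (k : ℕ) :
    T^[k] '' range (U 0) = U 0 '' range S^[k] := by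
  rw [← range_comp, ← range_comp]
  congr 1
  funext h
  simp only [comp_apply]
  rw [apply_zero_eq_apply_iterate hU k h, iterate_apply_apply_self hT]

theorem iInter_eq_image_iInter_range_iterate (hU : ∀ n h, U (n + 1) (S h) = U n h)
    (hT : ∀ n h, T (U (n + 1) h) = U n h) (hinj : Injective (U 0)) {V : ℤ → Set β}
    (hVnonneg : ∀ n : ℤ, 0 ≤ n → V n = range (U n.toNat))
    (hVneg : ∀ n : ℤ, n < 0 → V n = T^[n.natAbs] '' range (U 0)) :
    ⋂ n : ℤ, V n = U 0 '' ⋂ k : ℕ, range S^[k] := by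
  have hVneg' (k : ℕ) : V (-k) = U 0 '' range S^[k] := by
    rw [← image_iterate_range_zero hU hT]
    rcases k.eq_zero_or_pos with rfl | hk
    · simpa using hVnonneg 0 le_rfl
    · simpa using hVneg (-k) (by omega)
  rw [hinj.injOn.image_iInter_eq]
  apply Subset.antisymm
  · exact subset_iInter fun k => hVneg' k ▸ iInter_subset V (-k)
  · refine subset_iInter fun n => ?_
    rcases le_or_gt 0 n with hn | hn
    · rw [hVnonneg n hn]
      exact (iInter_subset _ 0).trans ((image_subset_range _ _).trans
        (range_zero_subset_range hU _))
    · obtain ⟨k, rfl⟩ : ∃ k : ℕ, n = -k := ⟨n.natAbs, by omega⟩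
      exact hVneg' k ▸ iInter_subset _ k

end DirectSystem

theorem iInter_one_le_range_iterate {α : Type*} (f : α → α) :
    ⋂ k : ℕ, ⋂ _ : 1 ≤ k, range f^[k] = ⋂ k : ℕ, range f^[k] := by
  refine Subset.antisymm (subset_iInter fun k => ?_)
    (iInter_mono fun _ => subset_iInter fun _ => subset_rfl)
  rcases k.eq_zero_or_pos with rfl | hk
  · simp
  · exact (iInter_subset _ k).trans (iInter_subset _ hk)

theorem statement2_general
    {K Kinf : Type*}
    [NormedAddCommGroup K] [InnerProductSpace ℂ K]
    [NormedAddCommGroup Kinf] [InnerProductSpace ℂ Kinf]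
    (S : K →ₗᵢ[ℂ] K) (U : ℕ → (K →ₗᵢ[ℂ] Kinf))
    (hU : ∀ (n : ℕ) (h : K), U (n + 1) (S h) = U n h)
    (Sinf : Kinf ≃ₗᵢ[ℂ] Kinf)
    (hSinf : ∀ (n : ℕ) (h : K), Sinf (U (n + 1) h) = U n h)
    (V : ℤ → Set Kinf)
    (hVnonneg : ∀ n : ℤ, 0 ≤ n → V n = Set.range (U n.toNat))
    (hVneg : ∀ n : ℤ, n < 0 → V n = (⇑Sinf)^[n.natAbs] '' Set.range (U 0)) :
    (⋂ n : ℤ, V n) = {0} ↔ (⋂ k : ℕ, ⋂ _ : 1 ≤ k, Set.range ((⇑S)^[k])) = {0} := by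
  rw [iInter_eq_image_iInter_range_iterate (U := fun n => U n) hU hSinf (U 0).injective
      hVnonneg hVneg,
    iInter_one_le_range_iterate, ← map_zero (U 0), ← image_singleton]
  exact (image_injective.2 (U 0).injective).eq_iff

theorem statement2
    {K Kinf : Type*}
    [NormedAddCommGroup K] [InnerProductSpace ℂ K] [CompleteSpace K] [SeparableSpace K]
    [NormedAddCommGroup Kinf] [InnerProductSpace ℂ Kinf] [CompleteSpace Kinf]
    [SeparableSpace Kinf]
    (S : K →ₗᵢ[ℂ] K) (U : ℕ → (K →ₗᵢ[ℂ] Kinf))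
    (hU : ∀ (n : ℕ) (h : K), U (n + 1) (S h) = U n h)
    (hdense : Dense (⋃ n : ℕ, Set.range (U n)))
    (Sinf : Kinf ≃ₗᵢ[ℂ] Kinf)
    (hSinf : ∀ (n : ℕ) (h : K), Sinf (U (n + 1) h) = U n h)
    (V : ℤ → Set Kinf)
    (hVnonneg : ∀ n : ℤ, 0 ≤ n → V n = Set.range (U n.toNat))
    (hVneg : ∀ n : ℤ, n < 0 → V n = (⇑Sinf)^[n.natAbs] '' Set.range (U 0)) :
    (⋂ n : ℤ, V n) = {0} ↔ (⋂ k : ℕ, ⋂ _ : 1 ≤ k, Set.range ((⇑S)^[k])) = {0} :=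
  statement2_general S U hU Sinf hSinf V hVnonneg hVneg
end

section
/- Let Γ be a countable abelian group and α : Γ → Γ an injective group endomorphism. Let S be an isometry on a separable Hilbert space K, let (K_∞, {U_n}) be the direct limit of the system K →S→ K →S→ ···, and let S_∞ be the unitary on K_∞ determined by S_∞(U_{n+1} h) = U_n h. Suppose ρ is a unitary representation of Γ on K satisfying S ρ_γ = ρ_{α(γ)} S for all γ ∈ Γ. Then there exists a unitary representation π of Γ on K_∞ such that π_γ ∘ U_n = U_n ∘ ρ_{α^n(γ)} for all n ≥ 0 and γ ∈ Γ (so each subspace V_n := U_n(K), n ≥ 0, is invariant under π), and S_∞ π_γ = π_{α(γ)} S_∞ for all γ ∈ Γ. -/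
/-!
On the `n`-th stage `U n (K)` of the direct limit, `π γ` has to act as `ρ (α^[n] γ)`. The relation
`S ρ_γ = ρ_{α γ} S` says precisely that the isometries `U n ∘ ρ (α^[n] γ)` again form a cone over
`K →S→ K →S→ ⋯`; any such cone of isometries glues to an isometry on the dense union of the stages
(both sides of the cone can be pushed to a common stage, where they are isometric), which extends
to `K_∞`. The group law and `S_∞ π_γ = π_{α γ} S_∞` hold on every stage, hence everywhere.
-/

theorem apply_add_iterate_of_apply_succ {K X : Type*} {S : K → K} {V : ℕ → K → X}
    (hV : ∀ n h, V (n + 1) (S h) = V n h) (n k : ℕ) (h : K) :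
    V (n + k) (S^[k] h) = V n h := by
  induction k generalizing h with
  | zero => rfl
  | succ k ih => rw [Function.iterate_succ_apply', ← Nat.add_assoc, hV, ih]

theorem Continuous.ext_on_iUnion_range {ι K X Y : Type*} [TopologicalSpace X]
    [TopologicalSpace Y] [T2Space Y] {U : ι → K → X} (hdense : Dense (⋃ n, Set.range (U n)))
    {f g : X → Y} (hf : Continuous f) (hg : Continuous g) (h : ∀ n k, f (U n k) = g (U n k)) :
    f = g :=
  hf.ext_on hdense hg <| by
    rintro _ ⟨_, ⟨n, rfl⟩, k, rfl⟩
    exact h n k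

def MonoidHom.toHomLinearIsometryEquiv {G R E : Type*} [Group G] [Semiring R]
    [SeminormedAddCommGroup E] [Module R E] (φ : G →* (E →ₗᵢ[R] E)) : G →* (E ≃ₗᵢ[R] E) where
  toFun g := .ofLinearIsometry (φ g) (φ g⁻¹).toLinearMap
    (LinearMap.ext fun x => show (φ g * φ g⁻¹) x = x by
      rw [← map_mul, mul_inv_cancel, map_one]; rfl)
    (LinearMap.ext fun x => show (φ g⁻¹ * φ g) x = x by
      rw [← map_mul, inv_mul_cancel, map_one]; rfl)
  map_one' := LinearIsometryEquiv.ext fun x => by simp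
  map_mul' g g' := LinearIsometryEquiv.ext fun x => by simp

section DirectLimit

variable {𝕜 K E F : Type*} [NormedField 𝕜]
  [NormedAddCommGroup K] [NormedSpace 𝕜 K] [NormedAddCommGroup E] [NormedSpace 𝕜 E]
  [NormedAddCommGroup F] [NormedSpace 𝕜 F] {S : K → K}

theorem Finsupp.sum_apply_eq_apply_sum_iterate {V : ℕ → K →ₗᵢ[𝕜] F}
    (hV : ∀ n h, V (n + 1) (S h) = V n h) (x : ℕ →₀ K) {N : ℕ} (hN : ∀ n ∈ x.support, n ≤ N) :
    (x.sum fun n => V n) = V N (x.sum fun n h => S^[N - n] h) := by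
  rw [map_finsuppSum]
  refine Finsupp.sum_congr fun n hn => ?_
  rw [← apply_add_iterate_of_apply_succ (V := fun n => ⇑(V n)) hV n (N - n),
    Nat.add_sub_cancel' (hN n hn)]

theorem norm_lsum_eq_of_apply_succ {U : ℕ → K →ₗᵢ[𝕜] E} (hU : ∀ n h, U (n + 1) (S h) = U n h)
    {W : ℕ → K →ₗᵢ[𝕜] F} (hW : ∀ n h, W (n + 1) (S h) = W n h) (x : ℕ →₀ K) :
    ‖Finsupp.lsum 𝕜 (fun n => (W n).toLinearMap) x‖ =
      ‖Finsupp.lsum 𝕜 (fun n => (U n).toLinearMap) x‖ := by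
  have hN : ∀ n ∈ x.support, n ≤ x.support.sup id := fun n hn => Finset.le_sup (f := id) hn
  simp only [Finsupp.lsum_apply, LinearIsometry.coe_toLinearMap, LinearIsometry.norm_map,
    Finsupp.sum_apply_eq_apply_sum_iterate hW x hN, Finsupp.sum_apply_eq_apply_sum_iterate hU x hN]

theorem exists_linearIsometry_apply_eq_of_apply_succ [CompleteSpace F] {U : ℕ → K →ₗᵢ[𝕜] E}
    (hU : ∀ n h, U (n + 1) (S h) = U n h) (hdense : Dense (⋃ n, Set.range (U n)))
    {W : ℕ → K →ₗᵢ[𝕜] F} (hW : ∀ n h, W (n + 1) (S h) = W n h) :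
    ∃ T : E →ₗᵢ[𝕜] F, ∀ n h, T (U n h) = W n h := by
  set e := Finsupp.lsum 𝕜 fun n => (U n).toLinearMap
  set f := Finsupp.lsum 𝕜 fun n => (W n).toLinearMap
  have he_single : ∀ n h, e (Finsupp.single n h) = U n h := by simp [e]
  have he : DenseRange e := hdense.mono <| Set.iUnion_subset fun n => by
    rintro _ ⟨h, rfl⟩
    exact ⟨_, he_single n h⟩
  have hfe : ∀ x, ‖f x‖ = ‖e x‖ := norm_lsum_eq_of_apply_succ hU hW
  -- `hfe` makes `f` descend to the range of `e`, and the bounded map on it extends by density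
  set T := f.extendOfNorm e
  have hT : ∀ x, T (e x) = f x :=
    LinearMap.extendOfNorm_eq he ⟨1, fun x => by rw [hfe, one_mul]⟩
  have hT_norm : (fun y => ‖T y‖) = fun y => ‖y‖ :=
    he.equalizer (by fun_prop) continuous_norm (funext fun x => by simp [hT, hfe])
  refine ⟨⟨T.toLinearMap, congrFun hT_norm⟩, fun n h => ?_⟩
  simpa [he_single, f] using hT (Finsupp.single n h)

theorem exists_monoidHom_apply_eq_of_apply_succ [CompleteSpace E] {G : Type*} [Group G]
    {U : ℕ → K →ₗᵢ[𝕜] E} (hU : ∀ n h, U (n + 1) (S h) = U n h)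
    (hdense : Dense (⋃ n, Set.range (U n)))
    (σ : ℕ → G →* (K ≃ₗᵢ[𝕜] K)) (hσ : ∀ n g h, σ (n + 1) g (S h) = S (σ n g h)) :
    ∃ π : G →* (E ≃ₗᵢ[𝕜] E), ∀ n g h, π g (U n h) = U n (σ n g h) := by
  have hW : ∀ g n h, (U (n + 1)).comp (σ (n + 1) g).toLinearIsometry (S h) =
      (U n).comp (σ n g).toLinearIsometry h := by
    simp [hσ, hU]
  choose π hπ using fun g => exists_linearIsometry_apply_eq_of_apply_succ hU hdense
    (W := fun n => (U n).comp (σ n g).toLinearIsometry) (hW g)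
  have hext {T T' : E →ₗᵢ[𝕜] E} (h : ∀ n h, T (U n h) = T' (U n h)) : T = T' :=
    LinearIsometry.ext <| congrFun <| T.continuous.ext_on_iUnion_range hdense T'.continuous h
  let φ : G →* (E →ₗᵢ[𝕜] E) :=
    { toFun := π
      map_one' := hext fun n h => by simp [hπ]
      map_mul' := fun g g' => hext fun n h => by simp [hπ] }
  exact ⟨φ.toHomLinearIsometryEquiv, fun n g h => hπ g n h⟩

end DirectLimit

open TopologicalSpace

theorem statement3_general
    {Γ : Type*} [CommGroup Γ]
    (α : Γ →* Γ)
    {K Kinf : Type*}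
    [NormedAddCommGroup K] [InnerProductSpace ℂ K]
    [NormedAddCommGroup Kinf] [InnerProductSpace ℂ Kinf] [CompleteSpace Kinf]
    (S : K →ₗᵢ[ℂ] K) (U : ℕ → (K →ₗᵢ[ℂ] Kinf))
    (hU : ∀ (n : ℕ) (h : K), U (n + 1) (S h) = U n h)
    (hdense : Dense (⋃ n : ℕ, Set.range (U n)))
    (Sinf : Kinf ≃ₗᵢ[ℂ] Kinf)
    (hSinf : ∀ (n : ℕ) (h : K), Sinf (U (n + 1) h) = U n h)
    (ρ : Γ →* (K ≃ₗᵢ[ℂ] K))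
    (hρ : ∀ (γ : Γ) (h : K), S (ρ γ h) = ρ (α γ) (S h)) :
    ∃ π : Γ →* (Kinf ≃ₗᵢ[ℂ] Kinf),
      (∀ (n : ℕ) (γ : Γ) (h : K), π γ (U n h) = U n (ρ ((⇑α)^[n] γ) h)) ∧
      (∀ (γ : Γ) (x : Kinf), Sinf (π γ x) = π (α γ) (Sinf x)) := by
  let σ : ℕ → Γ →* (K ≃ₗᵢ[ℂ] K) := fun n =>
    { toFun := fun γ => ρ ((⇑α)^[n] γ)
      map_one' := by simp [iterate_map_one]
      map_mul' := by simp [iterate_map_mul] }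
  have hσ : ∀ n γ h, σ (n + 1) γ (S h) = S (σ n γ h) := by
    simp [σ, hρ, Function.iterate_succ_apply']
  obtain ⟨π, hπ⟩ := exists_monoidHom_apply_eq_of_apply_succ hU hdense σ hσ
  have hSinfU : ∀ n h, Sinf (U n h) = U n (S h) := fun n h => by rw [← hU n h, hSinf]
  refine ⟨π, hπ, fun γ => congrFun <| Continuous.ext_on_iUnion_range hdense (by fun_prop)
    (by fun_prop) fun n h => ?_⟩
  simp only [hπ, hSinfU, σ, MonoidHom.coe_mk, OneHom.coe_mk, hρ]
  rw [← Function.iterate_succ_apply' (f := ⇑α), Function.iterate_succ_apply]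

theorem statement3
    {Γ : Type*} [CommGroup Γ] [Countable Γ]
    (α : Γ →* Γ) (hα : Function.Injective α)
    {K Kinf : Type*}
    [NormedAddCommGroup K] [InnerProductSpace ℂ K] [CompleteSpace K] [SeparableSpace K]
    [NormedAddCommGroup Kinf] [InnerProductSpace ℂ Kinf] [CompleteSpace Kinf]
    [SeparableSpace Kinf]
    (S : K →ₗᵢ[ℂ] K) (U : ℕ → (K →ₗᵢ[ℂ] Kinf))
    (hU : ∀ (n : ℕ) (h : K), U (n + 1) (S h) = U n h)
    (hdense : Dense (⋃ n : ℕ, Set.range (U n)))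
    (Sinf : Kinf ≃ₗᵢ[ℂ] Kinf)
    (hSinf : ∀ (n : ℕ) (h : K), Sinf (U (n + 1) h) = U n h)
    (ρ : Γ →* (K ≃ₗᵢ[ℂ] K))
    (hρ : ∀ (γ : Γ) (h : K), S (ρ γ h) = ρ (α γ) (S h)) :
    ∃ π : Γ →* (Kinf ≃ₗᵢ[ℂ] Kinf),
      (∀ (n : ℕ) (γ : Γ) (h : K), π γ (U n h) = U n (ρ ((⇑α)^[n] γ) h)) ∧
      (∀ (γ : Γ) (x : Kinf), Sinf (π γ x) = π (α γ) (Sinf x)) :=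
  statement3_general α S U hU hdense Sinf hSinf ρ hρ
end

section
/- With Γ, Γ̂, λ, α, α*, N as in the standing assumptions, let m : Γ̂ → {0,1,...,c} be Borel and let H be a filter relative to m and α*. Then for every n ≥ 1, the generalized filter identity ∑_{ζ : α*^n(ζ)=ω} [H(α*^{n-1}(ζ)) H(α*^{n-2}(ζ)) ··· H(ζ)] · [H*(ζ) H*(α*(ζ)) ··· H*(α*^{n-1}(ζ))] = N^n · Σ(ω) holds for λ-almost all ω ∈ Γ̂, where Σ(ω) is the diagonal matrix with entries χ_{σ_i}(ω) and H* denotes the conjugate transpose. -/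
/-!
Fibres of `α*^[n+1]` are unions of fibres of `α*` over the fibres of `α*^[n]`. Splitting off the
innermost factor `H(ζ) H(ζ)*` of each summand and summing it over the `α*`-fibre of `η = α* ζ`
gives `N Σ(η)` by the filter equation, and `Σ` is absorbed by the adjacent `H*`; induction on
`n` gives the identity at every `ω` whose backward orbits avoid the null set `B` where the filter
equation fails. The exceptional set `⋃ₖ α*^[k] '' B` is null: `α*` is a surjective (characters
extend along `α` because the circle is divisible) continuous endomorphism of the compact group
`Γ̂` with finite kernel (the dual of `Γ ⧸ α(Γ)`), so it is open, preserves Haar measure, and is at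
most `|ker α*|`-to-one, hence maps null sets to null sets.
-/

open MeasureTheory Matrix Topology
open scoped Pointwise

section IterateFiber

variable {X : Type*} (q : X → X)

def iterateSuccFiberEquiv (n : ℕ) (ω : X) :
    {ζ // q^[n + 1] ζ = ω} ≃ Σ η : {η // q^[n] η = ω}, {ζ // q ζ = η.1} where
  toFun ζ := ⟨⟨q ζ.1, by rw [← Function.iterate_succ_apply]; exact ζ.2⟩, ⟨ζ.1, rfl⟩⟩
  invFun p := ⟨p.2.1, by rw [Function.iterate_succ_apply, p.2.2]; exact p.1.2⟩
  left_inv _ := rfl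
  right_inv := by
    rintro ⟨⟨η, hη⟩, ⟨ζ, hζ : q ζ = η⟩⟩
    subst hζ
    rfl

variable {q}

theorem finite_iterate_fiber (hfin : ∀ x, Finite {ζ // q ζ = x}) (n : ℕ) (x : X) :
    Finite {ζ // q^[n] ζ = x} := by
  induction n generalizing x with
  | zero => exact Finite.of_subsingleton (α := {ζ // ζ = x})
  | succ n ih => exact Finite.of_equiv _ (iterateSuccFiberEquiv q n x).symm

theorem finsum_iterate_succ_fiber {M : Type*} [AddCommMonoid M]
    (hfin : ∀ x, Finite {ζ // q ζ = x}) (n : ℕ) (ω : X) (f : X → M) :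
    ∑ᶠ ζ : {ζ // q^[n + 1] ζ = ω}, f ζ
      = ∑ᶠ η : {η // q^[n] η = ω}, ∑ᶠ ζ : {ζ // q ζ = η.1}, f ζ := by
  have := finite_iterate_fiber hfin
  let := Fintype.ofFinite {η // q^[n] η = ω}
  let := fun η : {η // q^[n] η = ω} => Fintype.ofFinite {ζ // q ζ = η.1}
  let := Fintype.ofFinite {ζ // q^[n + 1] ζ = ω}
  simp only [finsum_eq_sum_of_fintype]
  rw [← (iterateSuccFiberEquiv q n ω).symm.sum_comp, Fintype.sum_sigma]
  rfl

variable {M : Type*} [Monoid M]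

def orbitProd (f : X → M) (q : X → X) (n : ℕ) (x : X) : M :=
  ((List.range n).map fun k => f (q^[k] x)).prod

def orbitProdRev (f : X → M) (q : X → X) (n : ℕ) (x : X) : M :=
  ((List.range n).reverse.map fun k => f (q^[k] x)).prod

@[simp] theorem orbitProd_zero (f : X → M) (x : X) : orbitProd f q 0 x = 1 := rfl

@[simp] theorem orbitProdRev_zero (f : X → M) (x : X) : orbitProdRev f q 0 x = 1 := rfl

theorem orbitProd_succ (f : X → M) (n : ℕ) (x : X) :
    orbitProd f q (n + 1) x = f x * orbitProd f q n (q x) := by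
  simp [orbitProd, List.range_succ_eq_map, Function.comp_def, Function.iterate_succ_apply]

theorem orbitProdRev_succ (f : X → M) (n : ℕ) (x : X) :
    orbitProdRev f q (n + 1) x = orbitProdRev f q n (q x) * f x := by
  simp [orbitProdRev, List.range_succ_eq_map, ← List.map_reverse, Function.comp_def,
    Function.iterate_succ_apply]

end IterateFiber

/-- Inserting `D` between the two products makes the identity hold from `n = 0` on; since
`D * K = K`, it is absorbed in the induction step. -/
theorem finsum_iterate_fiber_orbitProdRev_mul_mul_orbitProd {X R M : Type*} {q : X → X}
    [CommSemiring R] [Semiring M] [Algebra R M]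
    (hfin : ∀ x, Finite {ζ // q ζ = x}) (H K D : X → M) (N : R) (hDK : ∀ x, D x * K x = K x)
    (ω : X) (hfilter : ∀ k η, q^[k] η = ω → ∑ᶠ ζ : {ζ // q ζ = η}, H ζ * K ζ = N • D η)
    (n : ℕ) :
    ∑ᶠ ζ : {ζ // q^[n] ζ = ω}, orbitProdRev H q n ζ * D ζ * orbitProd K q n ζ = N ^ n • D ω := by
  induction n with
  | zero =>
    simp only [orbitProdRev_zero, orbitProd_zero, one_mul, mul_one, pow_zero, one_smul]
    exact (finsum_unique (α := {ζ // ζ = ω}) _).trans (congrArg D (default : {ζ // ζ = ω}).2)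
  | succ n ih =>
    have := finite_iterate_fiber hfin n ω
    calc _ = ∑ᶠ η : {η // q^[n] η = ω}, ∑ᶠ ζ : {ζ // q ζ = η.1},
          orbitProdRev H q n η * (H ζ * K ζ) * orbitProd K q n η := by
          refine (finsum_iterate_succ_fiber hfin n ω
            fun x => orbitProdRev H q (n + 1) x * D x * orbitProd K q (n + 1) x).trans <|
            finsum_congr fun η => finsum_congr fun ζ => ?_
          rw [orbitProd_succ, orbitProdRev_succ, ζ.2, ← mul_assoc, mul_assoc _ (D ζ), hDK]
          simp only [mul_assoc]
      _ = ∑ᶠ η : {η // q^[n] η = ω}, N • (orbitProdRev H q n η * D η * orbitProd K q n η) := by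
          refine finsum_congr fun η => ?_
          rw [← finsum_mul' _ _ (Set.toFinite _), ← mul_finsum' _ _ (Set.toFinite _),
            hfilter n η η.2, mul_smul_comm, smul_mul_assoc]
      _ = N ^ (n + 1) • D ω := by
          rw [← smul_finsum' _ (Set.toFinite _), ih, smul_smul, pow_succ']

theorem finsum_iterate_fiber_orbitProdRev_mul_orbitProd {X R M : Type*} {q : X → X}
    [CommSemiring R] [Semiring M] [Algebra R M]
    (hfin : ∀ x, Finite {ζ // q ζ = x}) (H K D : X → M) (N : R) (hDK : ∀ x, D x * K x = K x)
    (ω : X) (hfilter : ∀ k η, q^[k] η = ω → ∑ᶠ ζ : {ζ // q ζ = η}, H ζ * K ζ = N • D η)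
    {n : ℕ} (hn : n ≠ 0) :
    ∑ᶠ ζ : {ζ // q^[n] ζ = ω}, orbitProdRev H q n ζ * orbitProd K q n ζ = N ^ n • D ω := by
  obtain ⟨n, rfl⟩ := Nat.exists_eq_succ_of_ne_zero hn
  rw [← finsum_iterate_fiber_orbitProdRev_mul_mul_orbitProd hfin H K D N hDK ω hfilter]
  refine finsum_congr fun ζ => ?_
  rw [orbitProd_succ, mul_assoc, ← mul_assoc (D _), hDK]

noncomputable instance : DivisibleBy (Additive Circle) ℤ :=
  Function.Surjective.divisibleBy (A := AddCircle (1 : ℝ))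
    (fun x => Additive.ofMul (AddCircle.toCircle x))
    (fun y => by
      obtain ⟨x, hx⟩ := (AddCircle.homeomorphCircle one_ne_zero).surjective y.toMul
      exact ⟨x, by simp only [← AddCircle.homeomorphCircle_apply one_ne_zero, hx]; rfl⟩)
    (fun x n => by simp [AddCircle.toCircle_zsmul])

theorem PontryaginDual.map_surjective {A B : Type*} [CommGroup A] [CommGroup B]
    [TopologicalSpace A] [TopologicalSpace B] [DiscreteTopology B]
    (f : A →ₜ* B) (hf : Function.Injective f) : Function.Surjective (PontryaginDual.map f) := by
  intro χ
  obtain ⟨ψ, hψ⟩ := (Module.Baer.of_divisible (Additive Circle)).extension_property_addMonoidHom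
    (MonoidHom.toAdditive (f : A →* B)) hf (MonoidHom.toAdditive (χ : A →* Circle))
  refine ⟨⟨MonoidHom.toAdditive.symm ψ, continuous_of_discreteTopology⟩, ?_⟩
  refine PontryaginDual.ext fun a => ?_
  exact congrArg Additive.toMul (DFunLike.congr_fun hψ (Additive.ofMul a))

theorem Circle.finite_setOf_pow_eq_one {n : ℕ} (hn : n ≠ 0) : {z : Circle | z ^ n = 1}.Finite :=
  ((Polynomial.nthRootsFinset n (1 : ℂ)).finite_toSet.preimage Circle.coe_injective.injOn).subset
    fun z hz => (Polynomial.mem_nthRootsFinset (Nat.pos_of_ne_zero hn) _).2 <| by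
      exact_mod_cast congrArg ((↑) : Circle → ℂ) hz

theorem PontryaginDual.finite_ker_map {A B : Type*} [CommGroup A] [CommGroup B]
    [TopologicalSpace A] [TopologicalSpace B]
    (f : A →ₜ* B) (hf : (f : A →* B).range.index ≠ 0) :
    Finite (PontryaginDual.map f).toMonoidHom.ker := by
  set R := (f : A →* B).range
  have : R.FiniteIndex := ⟨hf⟩
  have := (Circle.finite_setOf_pow_eq_one hf).to_subtype
  have hR : ∀ χ ∈ (PontryaginDual.map f).toMonoidHom.ker, ∀ b ∈ R, χ b = 1 := by
    rintro χ hχ _ ⟨a, rfl⟩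
    exact DFunLike.congr_fun hχ a
  have hpow (χ) (hχ : χ ∈ (PontryaginDual.map f).toMonoidHom.ker) (b : B) : χ b ^ R.index = 1 := by
    rw [← _root_.map_pow, hR χ hχ _ (R.pow_index_mem b)]
  have hout (χ) (hχ : χ ∈ (PontryaginDual.map f).toMonoidHom.ker) (b : B) :
      χ (b : B ⧸ R).out = χ b := by
    obtain ⟨r, hr⟩ := QuotientGroup.mk_out_eq_mul R b
    rw [hr, _root_.map_mul, hR χ hχ r r.2, mul_one]
  refine Finite.of_injective (fun χ c => (⟨χ.1 (c : B ⧸ R).out, hpow χ χ.2 _⟩ :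
    {z : Circle | z ^ R.index = 1})) fun χ ψ h => Subtype.ext (PontryaginDual.ext fun b => ?_)
  rw [← hout χ χ.2, ← hout ψ ψ.2]
  exact congrArg Subtype.val (congrFun h b)

theorem MonoidHom.preimage_image_eq_iUnion_smul {G H : Type*} [Group G] [Group H] (f : G →* H)
    (U : Set G) : f ⁻¹' (f '' U) = ⋃ k : f.ker, (k : G) • U := by
  ext x
  simp only [Set.mem_preimage, Set.mem_image, Set.mem_iUnion, Set.mem_smul_set, smul_eq_mul]
  constructor
  · rintro ⟨u, hu, hux⟩
    exact ⟨⟨x * u⁻¹, by simp [hux]⟩, u, hu, by simp⟩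
  · rintro ⟨k, u, hu, rfl⟩
    exact ⟨u, hu, by rw [map_mul, f.mem_ker.1 k.2, one_mul]⟩

theorem MeasureTheory.Measure.map_image_le_card_ker_mul {G H : Type*}
    [Group G] [TopologicalSpace G] [IsTopologicalGroup G] [MeasurableSpace G] [BorelSpace G]
    [Group H] [TopologicalSpace H] [MeasurableSpace H] [BorelSpace H]
    (μ : Measure G) [μ.IsMulLeftInvariant] [μ.OuterRegular]
    (f : G →* H) (hf : Continuous f) (hf' : IsOpenMap f) [Finite f.ker] (A : Set G) :
    μ.map f (f '' A) ≤ Nat.card f.ker * μ A := by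
  let := Fintype.ofFinite f.ker
  have hcard : (Nat.card f.ker : ENNReal) ≠ 0 := Nat.cast_ne_zero.2 Nat.card_pos.ne'
  rw [A.measure_eq_iInf_isOpen μ]
  simp only [ENNReal.mul_iInf_of_ne hcard (ENNReal.natCast_ne_top _)]
  refine le_iInf fun U => le_iInf fun hAU => le_iInf fun hU => ?_
  calc μ.map f (f '' A) ≤ μ.map f (f '' U) := measure_mono (Set.image_mono hAU)
    _ = μ (⋃ k : f.ker, (k : G) • U) := by
      rw [Measure.map_apply hf.measurable (hf' U hU).measurableSet,
        f.preimage_image_eq_iUnion_smul]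
    _ ≤ ∑ k : f.ker, μ ((k : G) • U) := measure_iUnion_fintype_le μ _
    _ = Nat.card f.ker * μ U := by
      simp only [measure_smul, Finset.sum_const, Finset.card_univ, nsmul_eq_mul,
        Nat.card_eq_fintype_card]

section CompactGroup

variable {G : Type*} [Group G] [TopologicalSpace G] [IsTopologicalGroup G] [CompactSpace G]
  [T2Space G] [MeasurableSpace G] [BorelSpace G]
  (μ : Measure G) [μ.IsHaarMeasure] [IsProbabilityMeasure μ]
  {f : G →* G}

theorem MeasureTheory.Measure.map_eq_self_of_surjective (hf : Continuous f)
    (hsurj : Function.Surjective f) : μ.map f = μ := by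
  have := isHaarMeasure_map_of_isFiniteMeasure μ f hf hsurj
  have := isProbabilityMeasure_map (μ := μ) hf.measurable.aemeasurable
  exact isHaarMeasure_eq_of_isProbabilityMeasure _ _

theorem MeasureTheory.Measure.ae_forall_iterate_eq_imp [μ.OuterRegular] [Finite f.ker]
    (hf : Continuous f) (hsurj : Function.Surjective f)
    {p : G → Prop} (hp : ∀ᵐ x ∂μ, p x) : ∀ᵐ ω ∂μ, ∀ k ζ, f^[k] ζ = ω → p ζ := by
  have himage (A : Set G) (hA : μ A = 0) : μ (f '' A) = 0 := by
    have := μ.map_image_le_card_ker_mul f hf (f.isOpenMap_of_sigmaCompact hsurj hf) A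
    rwa [μ.map_eq_self_of_surjective hf hsurj, hA, mul_zero, nonpos_iff_eq_zero] at this
  have hiterate (k : ℕ) : μ (f^[k] '' {x | ¬ p x}) = 0 := by
    induction k with
    | zero => simpa [ae_iff] using hp
    | succ k ih => rw [Function.iterate_succ', Set.image_comp]; exact himage _ ih
  rw [ae_iff]
  refine measure_mono_null (fun ω hω => ?_) (measure_iUnion_null hiterate)
  obtain ⟨k, ζ, hζ, hpζ⟩ : ∃ k ζ, f^[k] ζ = ω ∧ ¬ p ζ := by simpa using hω
  exact Set.mem_iUnion.2 ⟨k, ζ, hpζ, hζ⟩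

end CompactGroup

theorem Matrix.diagonal_indicator_mul_conjTranspose {m n α : Type*} [Fintype n] [DecidableEq n]
    [Semiring α] [StarRing α] (p : n → Prop) [DecidablePred p] (A : Matrix m n α)
    (hA : ∀ i j, ¬ p j → A i j = 0) :
    diagonal (fun j => if p j then (1 : α) else 0) * Aᴴ = Aᴴ := by
  ext j i
  by_cases hj : p j <;> simp [hj, hA i j]

theorem statement10_general
    {Γ : Type*} [CommGroup Γ] [Countable Γ] [TopologicalSpace Γ] [DiscreteTopology Γ]
    [MeasurableSpace (PontryaginDual Γ)] [BorelSpace (PontryaginDual Γ)]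
    [CompactSpace (PontryaginDual Γ)]
    (lam : Measure (PontryaginDual Γ)) [lam.IsHaarMeasure] [IsProbabilityMeasure lam]
    (α : Γ →* Γ) (hα : Function.Injective α) (N : ℕ) (hN : 0 < N)
    (hidx : α.range.index = N)
    (q : PontryaginDual Γ → PontryaginDual Γ)
    (hq : ∀ (ω : PontryaginDual Γ) (γ : Γ), q ω γ = ω (α γ))
    (c : ℕ) (m : PontryaginDual Γ → ℕ)
    (H : PontryaginDual Γ → Matrix (Fin c) (Fin c) ℂ)
    (hHsupp : ∀ (ω : PontryaginDual Γ) (i j : Fin c), m ω < (j : ℕ) + 1 → H ω i j = 0)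
    (hHfilter : ∀ᵐ ω ∂lam,
      (∑ᶠ ζ : {ζ : PontryaginDual Γ // q ζ = ω}, H ζ.1 * (H ζ.1)ᴴ)
        = (N : ℂ) • Matrix.diagonal
            (fun i : Fin c => if (i : ℕ) + 1 ≤ m ω then (1 : ℂ) else 0)) :
    ∀ n : ℕ, 1 ≤ n → ∀ᵐ ω ∂lam,
      (∑ᶠ ζ : {ζ : PontryaginDual Γ // q^[n] ζ = ω},
          (((List.range n).reverse.map fun k => H (q^[k] ζ.1)).prod) *
            (((List.range n).map fun k => (H (q^[k] ζ.1))ᴴ).prod))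
        = ((N : ℂ) ^ n) • Matrix.diagonal
            (fun i : Fin c => if (i : ℕ) + 1 ≤ m ω then (1 : ℂ) else 0) := by
  intro n hn
  let α' : Γ →ₜ* Γ := ⟨α, continuous_of_discreteTopology⟩
  obtain rfl : q = PontryaginDual.map α' := funext fun ω => PontryaginDual.ext (hq ω)
  have hsurj := PontryaginDual.map_surjective α' hα
  have := PontryaginDual.finite_ker_map α' (hidx.trans_ne hN.ne')
  -- makes `lam` outer regular
  have := (ContinuousMonoidHom.isInducing_toContinuousMap Γ Circle).secondCountableTopology
  have hfib (x) : Finite {ζ // PontryaginDual.map α' ζ = x} :=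
    Finite.of_equiv _ (MonoidHom.fiberEquivKerOfSurjective hsurj x).symm
  filter_upwards [lam.ae_forall_iterate_eq_imp (f := (PontryaginDual.map α').toMonoidHom)
    (map_continuous (PontryaginDual.map α')) hsurj hHfilter] with ω hω
  exact finsum_iterate_fiber_orbitProdRev_mul_orbitProd hfib H (fun ζ => (H ζ)ᴴ) _ (N : ℂ)
    (fun ζ => diagonal_indicator_mul_conjTranspose _ (H ζ) fun i j hj => hHsupp ζ i j (not_le.1 hj))
    ω hω (by omega)

theorem statement10
    {Γ : Type*} [CommGroup Γ] [Countable Γ] [TopologicalSpace Γ] [DiscreteTopology Γ]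
    [MeasurableSpace (PontryaginDual Γ)] [BorelSpace (PontryaginDual Γ)]
    [CompactSpace (PontryaginDual Γ)]
    (lam : Measure (PontryaginDual Γ)) [lam.IsHaarMeasure] [IsProbabilityMeasure lam]
    (α : Γ →* Γ) (hα : Function.Injective α) (N : ℕ) (hN : 0 < N)
    (hidx : α.range.index = N)
    (q : PontryaginDual Γ → PontryaginDual Γ)
    (hq : ∀ (ω : PontryaginDual Γ) (γ : Γ), q ω γ = ω (α γ))
    (hdense : Dense (⋃ n : ℕ, ⋃ _ : 1 ≤ n, {ω : PontryaginDual Γ | q^[n] ω = 1}))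
    (c : ℕ) (m : PontryaginDual Γ → ℕ) (hm : Measurable m) (hmc : ∀ ω, m ω ≤ c)
    (H : PontryaginDual Γ → Matrix (Fin c) (Fin c) ℂ)
    (hHmeas : ∀ i j, Measurable fun ω => H ω i j)
    (hHsupp : ∀ (ω : PontryaginDual Γ) (i j : Fin c), m ω < (j : ℕ) + 1 → H ω i j = 0)
    (hHfilter : ∀ᵐ ω ∂lam,
      (∑ᶠ ζ : {ζ : PontryaginDual Γ // q ζ = ω}, H ζ.1 * (H ζ.1)ᴴ)
        = (N : ℂ) • Matrix.diagonal
            (fun i : Fin c => if (i : ℕ) + 1 ≤ m ω then (1 : ℂ) else 0)) :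
    ∀ n : ℕ, 1 ≤ n → ∀ᵐ ω ∂lam,
      (∑ᶠ ζ : {ζ : PontryaginDual Γ // q^[n] ζ = ω},
          (((List.range n).reverse.map fun k => H (q^[k] ζ.1)).prod) *
            (((List.range n).map fun k => (H (q^[k] ζ.1))ᴴ).prod))
        = ((N : ℂ) ^ n) • Matrix.diagonal
            (fun i : Fin c => if (i : ℕ) + 1 ≤ m ω then (1 : ℂ) else 0) :=
  statement10_general lam α hα N hN hidx q hq c m H hHsupp hHfilter
end

section
/- With Γ, Γ̂, λ, α, α*, N as in the standing assumptions, let m : Γ̂ → {0,1,...,c} be Borel, H a filter relative to m and α*, and S_H the isometry on K = ⊕_{i=1}^c L²(σ_i, λ) given by (S_H f)(ω) = H(ω)^t f(α*(ω)). Let f ∈ ⋂_{n≥0} S_H^n(K) and set f_n := S_H^{*n} f. Then for every n ≥ 1 and λ-almost all ω: ‖f_n(ω)‖² = N^{-n} ∑_{ζ : α*^n(ζ)=ω} ‖f(ζ)‖², where ‖·‖ is the Euclidean norm on ℂ^c. -/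
/-!
STATEMENT 11 (Lemma `weeglimmer`): If `f ∈ ⋂_{n ≥ 0} S_Hⁿ(K)` and `f_n := S_H*ⁿ f`, then for
every `n ≥ 1` and λ-almost all `ω`: `‖f_n(ω)‖² = N^{-n} ∑_{α*ⁿ(ζ)=ω} ‖f(ζ)‖²`, where `‖·‖`
is the Euclidean norm on `ℂ^c` (so `‖v‖² = ∑_i ‖v_i‖²`).
-/

open MeasureTheory Matrix Topology

/-- `f` represents an element of `K = ⊕_{i=1}^c L²(σ_i, λ)`. -/
def MemDirectSumL2 {G : Type*} [MeasurableSpace G] (lam : Measure G) (c : ℕ)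
    (m : G → ℕ) (f : G → Fin c → ℂ) : Prop :=
  (∀ i : Fin c, Measurable fun ω => f ω i) ∧
  (∀ (ω : G) (i : Fin c), m ω < (i : ℕ) + 1 → f ω i = 0) ∧
  MeasureTheory.MemLp f 2 lam

/-- The operator `S_H`: `(S_H f)(ω) = H(ω)ᵗ • f(α*(ω))`. -/
noncomputable def filterIsometry {G : Type*} (c : ℕ) (H : G → Matrix (Fin c) (Fin c) ℂ)
    (q : G → G) (f : G → Fin c → ℂ) : G → Fin c → ℂ :=
  fun ω => (H ω)ᵀ.mulVec (f (q ω))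

/-- The adjoint `S_H*`: `(S_H* f)(ω) = (1/N) ∑_{q ζ = ω} conj(H(ζ)) • f(ζ)`. -/
noncomputable def filterAdjoint {G : Type*} (c N : ℕ) (H : G → Matrix (Fin c) (Fin c) ℂ)
    (q : G → G) (f : G → Fin c → ℂ) : G → Fin c → ℂ :=
  fun ω => (N : ℂ)⁻¹ •
    ∑ᶠ ζ : {ζ : G // q ζ = ω}, ((H ζ.1).map (starRingEnd ℂ)).mulVec (f ζ.1)


/-!
The dual map `α*` is a continuous surjective endomorphism of the compact group `Γ̂` with finite
kernel. Hence it preserves `λ`, is open, and sends null sets to null sets, so an almost-everywhere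
statement holds at every point of almost every fibre of `α*ⁿ`. Write `f = S_Hⁿ g`. The filter
identity `∑_{α* ζ = ω} H(ζ) H(ζ)* = N Σ(ω)` gives two facts, pointwise almost everywhere:
`S_H* S_H g = g`, and `∑_{α* ζ = η} ‖H(ζ)ᵗ v‖² = N ‖v‖²` for `v` supported on `σ(η)`.
Iterating them yields `S_H*ⁿ f = g` and `∑_{α*ⁿ ζ = ω} ‖f(ζ)‖² = Nⁿ ‖g(ω)‖²`.
-/

section Fibers

variable {G : Type*} (q : G → G)

def fiberIterateSuccEquiv (n : ℕ) (ω : G) :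
    {ζ : G // q^[n + 1] ζ = ω} ≃ Σ η : {η : G // q^[n] η = ω}, {ζ : G // q ζ = η.1} where
  toFun ζ := ⟨⟨q ζ.1, ζ.2⟩, ⟨ζ.1, rfl⟩⟩
  invFun p := ⟨p.2.1, by rw [Function.iterate_succ_apply, p.2.2]; exact p.1.2⟩
  left_inv _ := rfl
  right_inv p := Sigma.subtype_ext (Subtype.ext p.2.2) rfl

variable {q}

theorem finite_fiber_iterate (hfin : ∀ ω, Finite {ζ : G // q ζ = ω}) :
    ∀ (n : ℕ) (ω : G), Finite {ζ : G // q^[n] ζ = ω}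
  | 0, ω => (Set.finite_singleton ω).to_subtype
  | n + 1, ω =>
    have := finite_fiber_iterate hfin n ω
    .of_equiv _ (fiberIterateSuccEquiv q n ω).symm

theorem finsum_fiber_iterate_succ {M : Type*} [AddCommMonoid M]
    (hfin : ∀ ω, Finite {ζ : G // q ζ = ω}) (n : ℕ) (ω : G) (φ : G → M) :
    ∑ᶠ ζ : {ζ : G // q^[n + 1] ζ = ω}, φ ζ
      = ∑ᶠ η : {η : G // q^[n] η = ω}, ∑ᶠ ζ : {ζ : G // q ζ = η.1}, φ ζ := by
  have := finite_fiber_iterate hfin n ω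
  have := finite_fiber_iterate hfin (n + 1) ω
  have := Fintype.ofFinite {η : G // q^[n] η = ω}
  have := Fintype.ofFinite {ζ : G // q^[n + 1] ζ = ω}
  have (η : G) := Fintype.ofFinite {ζ : G // q ζ = η}
  simp only [finsum_eq_sum_of_fintype]
  rw [← (fiberIterateSuccEquiv q n ω).symm.sum_comp, Fintype.sum_sigma]
  rfl

section Measure

variable [MeasurableSpace G] {μ : Measure G}

theorem ae_forall_fiber (hnull : ∀ S, μ S = 0 → μ (q '' S) = 0) {P : G → Prop}
    (hP : ∀ᵐ ζ ∂μ, P ζ) : ∀ᵐ ω ∂μ, ∀ ζ, q ζ = ω → P ζ := by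
  refine ae_iff.2 (measure_mono_null ?_ (hnull _ (ae_iff.1 hP)))
  rintro ω hω
  push Not at hω
  obtain ⟨ζ, rfl, hζ⟩ := hω
  exact ⟨ζ, hζ, rfl⟩

theorem ae_forall_fiber_iterate (hnull : ∀ S, μ S = 0 → μ (q '' S) = 0) (n : ℕ)
    {P : G → Prop}
    (hP : ∀ᵐ ζ ∂μ, P ζ) : ∀ᵐ ω ∂μ, ∀ ζ, q^[n] ζ = ω → P ζ := by
  induction n generalizing P with
  | zero => simpa using hP
  | succ n ih =>
    filter_upwards [ih (ae_forall_fiber hnull hP)] with ω hω ζ hζ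
    exact hω (q ζ) hζ ζ rfl

end Measure

end Fibers

section FilterAlgebra

variable {G : Type*} {c N : ℕ} {H : G → Matrix (Fin c) (Fin c) ℂ} {q : G → G} {m : G → ℕ}

/-- The paper's `Σ(ω) = diag(χ_{σ_i}(ω))`; the coordinate `i : Fin c` is the paper's index
`i + 1`. -/
def supportProjection (c : ℕ) (m : G → ℕ) (ω : G) : Matrix (Fin c) (Fin c) ℂ :=
  diagonal fun i => if (i : ℕ) + 1 ≤ m ω then 1 else 0

theorem supportProjection_mulVec {ω : G} {v : Fin c → ℂ}
    (hv : ∀ i : Fin c, m ω < (i : ℕ) + 1 → v i = 0) : supportProjection c m ω *ᵥ v = v := by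
  ext i
  rw [supportProjection, mulVec_diagonal]
  split_ifs with hi
  · rw [one_mul]
  · rw [zero_mul, hv i (by omega)]

theorem ofReal_sum_norm_sq (v : Fin c → ℂ) : ((∑ i, ‖v i‖ ^ 2 : ℝ) : ℂ) = star v ⬝ᵥ v := by
  simp [dotProduct, Complex.conj_mul']

theorem sum_fiber_transpose_conjTranspose_mul_transpose (ω : G) [Fintype {ζ : G // q ζ = ω}]
    (hfil : ∑ᶠ ζ : {ζ : G // q ζ = ω}, H ζ.1 * (H ζ.1)ᴴ = (N : ℂ) • supportProjection c m ω) :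
    ∑ ζ : {ζ : G // q ζ = ω}, (H ζ.1)ᵀᴴ * (H ζ.1)ᵀ = (N : ℂ) • supportProjection c m ω := by
  calc ∑ ζ : {ζ : G // q ζ = ω}, (H ζ.1)ᵀᴴ * (H ζ.1)ᵀ
      = (∑ ζ : {ζ : G // q ζ = ω}, H ζ.1 * (H ζ.1)ᴴ)ᵀ := by
        simp only [transpose_sum, transpose_mul,
          conjTranspose_transpose_eq_transpose_conjTranspose]
    _ = (N : ℂ) • supportProjection c m ω := by
        rw [← finsum_eq_sum_of_fintype, hfil, transpose_smul, supportProjection,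
          diagonal_transpose]

theorem filterIsometry_apply (f : G → Fin c → ℂ) (ω : G) :
    filterIsometry c H q f ω = (H ω)ᵀ *ᵥ f (q ω) := rfl

theorem filterAdjoint_filterIsometry_apply (hN : (N : ℂ) ≠ 0) (ω : G) [Finite {ζ : G // q ζ = ω}]
    (hfil : ∑ᶠ ζ : {ζ : G // q ζ = ω}, H ζ.1 * (H ζ.1)ᴴ = (N : ℂ) • supportProjection c m ω)
    (f : G → Fin c → ℂ) (hf : ∀ i : Fin c, m ω < (i : ℕ) + 1 → f ω i = 0) :
    filterAdjoint c N H q (filterIsometry c H q f) ω = f ω := by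
  have := Fintype.ofFinite {ζ : G // q ζ = ω}
  calc filterAdjoint c N H q (filterIsometry c H q f) ω
      = (N : ℂ)⁻¹ • ∑ ζ : {ζ : G // q ζ = ω}, ((H ζ.1)ᵀᴴ * (H ζ.1)ᵀ) *ᵥ f ω := by
        rw [filterAdjoint, finsum_eq_sum_of_fintype]
        congr 1
        refine Finset.sum_congr rfl fun ζ _ => ?_
        rw [filterIsometry_apply, ζ.2, mulVec_mulVec]
        rfl
    _ = f ω := by
        rw [← sum_mulVec, sum_fiber_transpose_conjTranspose_mul_transpose ω hfil,
          smul_mulVec, supportProjection_mulVec hf, smul_smul, inv_mul_cancel₀ hN, one_smul]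

theorem finsum_fiber_norm_sq_filterIsometry (η : G) [Finite {ζ : G // q ζ = η}]
    (hfil : ∑ᶠ ζ : {ζ : G // q ζ = η}, H ζ.1 * (H ζ.1)ᴴ = (N : ℂ) • supportProjection c m η)
    (f : G → Fin c → ℂ) (hf : ∀ i : Fin c, m η < (i : ℕ) + 1 → f η i = 0) :
    ∑ᶠ ζ : {ζ : G // q ζ = η}, ∑ i, ‖filterIsometry c H q f ζ.1 i‖ ^ 2
      = N * ∑ i, ‖f η i‖ ^ 2 := by
  have := Fintype.ofFinite {ζ : G // q ζ = η}
  apply Complex.ofReal_injective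
  calc ((∑ᶠ ζ : {ζ : G // q ζ = η}, ∑ i, ‖filterIsometry c H q f ζ.1 i‖ ^ 2 : ℝ) : ℂ)
      = ∑ ζ : {ζ : G // q ζ = η}, star (f η) ⬝ᵥ ((H ζ.1)ᵀᴴ * (H ζ.1)ᵀ) *ᵥ f η := by
        rw [finsum_eq_sum_of_fintype, Complex.ofReal_sum]
        refine Finset.sum_congr rfl fun ζ _ => ?_
        rw [ofReal_sum_norm_sq, filterIsometry_apply, ζ.2, star_mulVec, ← dotProduct_mulVec,
          mulVec_mulVec]
    _ = star (f η) ⬝ᵥ ((N : ℂ) • supportProjection c m η) *ᵥ f η := by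
        rw [← sum_fiber_transpose_conjTranspose_mul_transpose η hfil, sum_mulVec, dotProduct_sum]
    _ = ((N * ∑ i, ‖f η i‖ ^ 2 : ℝ) : ℂ) := by
        rw [smul_mulVec, supportProjection_mulVec hf, dotProduct_smul, smul_eq_mul,
          Complex.ofReal_mul, ofReal_sum_norm_sq, Complex.ofReal_natCast]

theorem filterAdjoint_iterate_congr (n : ℕ) {f₁ f₂ : G → Fin c → ℂ} {ω : G}
    (hf : ∀ ζ, q^[n] ζ = ω → f₁ ζ = f₂ ζ) :
    (filterAdjoint c N H q)^[n] f₁ ω = (filterAdjoint c N H q)^[n] f₂ ω := by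
  induction n generalizing f₁ f₂ ω with
  | zero => exact hf ω rfl
  | succ n ih =>
    simp only [Function.iterate_succ_apply]
    refine ih fun η hη => ?_
    simp only [filterAdjoint]
    congr 1
    exact finsum_congr fun ζ => by rw [hf ζ.1 (by rw [Function.iterate_succ_apply, ζ.2, hη])]

theorem filterIsometry_iterate_apply_eq_zero
    (hH : ∀ (ω : G) (i j : Fin c), m ω < (j : ℕ) + 1 → H ω i j = 0) {f : G → Fin c → ℂ}
    (hf : ∀ (ω : G) (i : Fin c), m ω < (i : ℕ) + 1 → f ω i = 0) :
    ∀ (n : ℕ) (ω : G) (i : Fin c), m ω < (i : ℕ) + 1 → (filterIsometry c H q)^[n] f ω i = 0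
  | 0, ω, i, hi => hf ω i hi
  | n + 1, ω, i, hi => by
    rw [Function.iterate_succ_apply', filterIsometry_apply, mulVec, dotProduct]
    exact Finset.sum_eq_zero fun j _ => by rw [transpose_apply, hH ω j i hi, zero_mul]

end FilterAlgebra

section Iterates

variable {G : Type*} [MeasurableSpace G] {μ : Measure G} {c N : ℕ}
  {H : G → Matrix (Fin c) (Fin c) ℂ} {q : G → G} {m : G → ℕ}
  (hfin : ∀ ω, Finite {ζ : G // q ζ = ω}) (hnull : ∀ S, μ S = 0 → μ (q '' S) = 0)
  (hHsupp : ∀ (ω : G) (i j : Fin c), m ω < (j : ℕ) + 1 → H ω i j = 0)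
  (hHfilter : ∀ᵐ ω ∂μ,
    ∑ᶠ ζ : {ζ : G // q ζ = ω}, H ζ.1 * (H ζ.1)ᴴ = (N : ℂ) • supportProjection c m ω)
  {g : G → Fin c → ℂ} (hg : ∀ (ω : G) (i : Fin c), m ω < (i : ℕ) + 1 → g ω i = 0)
include hfin hnull hHsupp hHfilter hg

theorem ae_filterAdjoint_iterate_filterIsometry_iterate (hN : (N : ℂ) ≠ 0) (k : ℕ) :
    ∀ᵐ ω ∂μ, (filterAdjoint c N H q)^[k] ((filterIsometry c H q)^[k] g) ω = g ω := by
  induction k with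
  | zero => exact ae_of_all _ fun _ => rfl
  | succ k ih =>
    filter_upwards [ih, ae_forall_fiber_iterate hnull k hHfilter] with ω hω hfil
    rw [Function.iterate_succ_apply, ← hω]
    refine filterAdjoint_iterate_congr k fun ζ hζ => ?_
    have := hfin ζ
    rw [Function.iterate_succ_apply']
    exact filterAdjoint_filterIsometry_apply hN ζ (hfil ζ hζ) _
      (filterIsometry_iterate_apply_eq_zero hHsupp hg k ζ)

theorem ae_finsum_fiber_iterate_norm_sq_filterIsometry_iterate (k : ℕ) :
    ∀ᵐ ω ∂μ, ∑ᶠ ζ : {ζ : G // q^[k] ζ = ω}, ∑ i, ‖(filterIsometry c H q)^[k] g ζ.1 i‖ ^ 2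
      = N ^ k * ∑ i, ‖g ω i‖ ^ 2 := by
  induction k with
  | zero =>
    refine ae_of_all _ fun ω => ?_
    let : Unique {ζ : G // q^[0] ζ = ω} := Unique.subtypeEq ω
    rw [finsum_unique, pow_zero, one_mul]
    rfl
  | succ k ih =>
    filter_upwards [ih, ae_forall_fiber_iterate hnull k hHfilter] with ω hω hfil
    have := finite_fiber_iterate hfin k ω
    calc ∑ᶠ ζ : {ζ : G // q^[k + 1] ζ = ω}, ∑ i, ‖(filterIsometry c H q)^[k + 1] g ζ.1 i‖ ^ 2
        = ∑ᶠ η : {η : G // q^[k] η = ω}, N * ∑ i, ‖(filterIsometry c H q)^[k] g η.1 i‖ ^ 2 := by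
          rw [finsum_fiber_iterate_succ hfin k ω
            fun ζ => ∑ i, ‖(filterIsometry c H q)^[k + 1] g ζ i‖ ^ 2]
          refine finsum_congr fun η => ?_
          have := hfin η.1
          simp only [Function.iterate_succ_apply']
          exact finsum_fiber_norm_sq_filterIsometry η.1 (hfil η.1 η.2) _
            (filterIsometry_iterate_apply_eq_zero hHsupp hg k η.1)
      _ = N ^ (k + 1) * ∑ i, ‖g ω i‖ ^ 2 := by
          rw [← mul_finsum' _ _ (Set.toFinite _), hω, pow_succ', mul_assoc]

end Iterates

section Dual

open scoped ENNReal Pointwise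

theorem MonoidHom.finite_preimage_singleton {G G' : Type*} [Group G] [Group G'] (q : G →* G')
    (hker : (q.ker : Set G).Finite) (ω : G') : (q ⁻¹' {ω}).Finite := by
  rcases (q ⁻¹' {ω}).eq_empty_or_nonempty with h | ⟨ζ₀, hζ₀⟩
  · simp [h]
  refine (hker.image (ζ₀ * ·)).subset fun ζ hζ => ⟨ζ₀⁻¹ * ζ, ?_, mul_inv_cancel_left ζ₀ ζ⟩
  simp_all [MonoidHom.mem_ker]

theorem measure_map_image_eq_zero_of_finite_ker {G G' : Type*} [Group G] [TopologicalSpace G]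
    [MeasurableSpace G] [OpensMeasurableSpace G] [Group G'] [TopologicalSpace G']
    [MeasurableSpace G'] [BorelSpace G'] {μ : Measure G} [μ.IsMulLeftInvariant] [μ.OuterRegular]
    (q : G →* G') (hq : Continuous q) (hopen : IsOpenMap q) (hker : (q.ker : Set G).Finite)
    {S : Set G} (hS : μ S = 0) : μ.map q (q '' S) = 0 := by
  set k : ℝ≥0∞ := (hker.toFinset.card : ℝ≥0∞)
  -- `q '' U` is open, hence measurable, for open `U`; `q '' S` itself need not be measurable.
  have hopen_le (U : Set G) (hU : IsOpen U) : μ.map q (q '' U) ≤ k * μ U := by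
    have hcover : q ⁻¹' (q '' U) ⊆ ⋃ κ ∈ hker.toFinset, κ • U := by
      rintro ζ ⟨u, hu, hqu⟩
      refine Set.mem_biUnion (x := ζ * u⁻¹) (by simp [MonoidHom.mem_ker, hqu]) ⟨u, hu, ?_⟩
      simp
    calc μ.map q (q '' U) = μ (q ⁻¹' (q '' U)) :=
          Measure.map_apply hq.measurable (hopen U hU).measurableSet
      _ ≤ ∑ κ ∈ hker.toFinset, μ (κ • U) :=
          (measure_mono hcover).trans (measure_biUnion_finset_le _ _)
      _ = k * μ U := by simp [measure_smul, k]
  refine le_antisymm (ENNReal.le_of_forall_pos_le_add fun ε hε _ => ?_) bot_le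
  obtain ⟨U, hSU, hU, hUε⟩ := Set.exists_isOpen_lt_of_lt S (ε / k)
    (hS ▸ ENNReal.div_pos (by exact_mod_cast hε.ne') (ENNReal.natCast_ne_top _))
  calc μ.map q (q '' S) ≤ μ.map q (q '' U) := measure_mono (Set.image_mono hSU)
    _ ≤ k * (ε / k) := (hopen_le U hU).trans (mul_le_mul_right hUε.le k)
    _ ≤ 0 + ε := by rw [zero_add]; exact ENNReal.mul_div_le

namespace PontryaginDual

variable {A B : Type*} [CommGroup A] [CommGroup B] [TopologicalSpace A] [TopologicalSpace B]
  [DiscreteTopology B]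

/-- `Circle` is divisible, hence an injective `ℤ`-module, so characters extend along `f`. -/
theorem map_surjective_of_injective (f : A →ₜ* B) (hf : Function.Injective f) :
    Function.Surjective (map f) := by
  intro ω
  let : DivisibleBy (Additive Circle) ℤ :=
    Function.Surjective.divisibleBy Circle.expHom
      (fun z => ⟨Complex.arg z.toMul, Circle.exp_arg z.toMul⟩) fun x n => map_zsmul _ n x
  obtain ⟨χ, hχ⟩ := (Module.Baer.of_divisible (Additive Circle)).extension_property_addMonoidHom
    f.toMonoidHom.toAdditive hf ω.toMonoidHom.toAdditive
  exact ⟨⟨MonoidHom.toAdditive.symm χ, continuous_of_discreteTopology⟩,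
    ext fun a => DFunLike.congr_fun hχ (Additive.ofMul a)⟩

theorem finite_ker_map_s11 (f : A →ₜ* B) [(f : A →* B).range.FiniteIndex] :
    ((map f : PontryaginDual B →* PontryaginDual A).ker : Set (PontryaginDual B)).Finite := by
  set R := (f : A →* B).range
  have : DiscreteTopology (B ⧸ R) := QuotientGroup.discreteTopology (isOpen_discrete _)
  let restrict (χ : (map f : PontryaginDual B →* PontryaginDual A).ker) :
      PontryaginDual (B ⧸ R) :=
    ⟨QuotientGroup.lift R χ.1 (by rintro _ ⟨a, rfl⟩; exact DFunLike.congr_fun χ.2 a),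
      continuous_of_discreteTopology⟩
  refine Set.finite_coe_iff.1 (Finite.of_injective restrict fun χ ψ h => ?_)
  exact Subtype.ext (ext fun b => DFunLike.congr_fun h (b : B ⧸ R))

theorem measure_image_map_eq_zero [DiscreteTopology A] [MeasurableSpace (PontryaginDual A)]
    [BorelSpace (PontryaginDual A)] (μ : Measure (PontryaginDual A)) [μ.IsHaarMeasure]
    [IsProbabilityMeasure μ] (f : A →ₜ* A) (hf : Function.Injective f)
    [(f : A →* A).range.FiniteIndex] {S : Set (PontryaginDual A)} (hS : μ S = 0) :
    μ (map f '' S) = 0 := by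
  have hsurj := map_surjective_of_injective f hf
  have : (μ.map (map f)).IsHaarMeasure :=
    Measure.isHaarMeasure_map_of_isFiniteMeasure μ (map f).toMonoidHom (map f).continuous hsurj
  have := Measure.isProbabilityMeasure_map (μ := μ) (map f).continuous.aemeasurable
  rw [← Measure.isHaarMeasure_eq_of_isProbabilityMeasure (μ.map (map f)) μ]
  exact measure_map_image_eq_zero_of_finite_ker (map f).toMonoidHom (map f).continuous
    (MonoidHom.isOpenMap_of_sigmaCompact _ hsurj (map f).continuous) (finite_ker_map_s11 f) hS

end PontryaginDual

end Dual

theorem statement11_general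
    {Γ : Type*} [CommGroup Γ] [TopologicalSpace Γ] [DiscreteTopology Γ]
    [MeasurableSpace (PontryaginDual Γ)] [BorelSpace (PontryaginDual Γ)]
    (lam : Measure (PontryaginDual Γ)) [lam.IsHaarMeasure] [IsProbabilityMeasure lam]
    (α : Γ →* Γ) (hα : Function.Injective α) (N : ℕ) (hN : 0 < N)
    (hidx : α.range.index = N)
    (q : PontryaginDual Γ → PontryaginDual Γ)
    (hq : ∀ (ω : PontryaginDual Γ) (γ : Γ), q ω γ = ω (α γ))
    (c : ℕ) (m : PontryaginDual Γ → ℕ)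
    (H : PontryaginDual Γ → Matrix (Fin c) (Fin c) ℂ)
    (hHsupp : ∀ (ω : PontryaginDual Γ) (i j : Fin c), m ω < (j : ℕ) + 1 → H ω i j = 0)
    (hHfilter : ∀ᵐ ω ∂lam,
      (∑ᶠ ζ : {ζ : PontryaginDual Γ // q ζ = ω}, H ζ.1 * (H ζ.1)ᴴ)
        = (N : ℂ) • Matrix.diagonal
            (fun i : Fin c => if (i : ℕ) + 1 ≤ m ω then (1 : ℂ) else 0))
    -- `f` lies in `⋂_{n ≥ 0} S_Hⁿ(K)`
    (f : PontryaginDual Γ → Fin c → ℂ)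
    (hfint : ∀ n : ℕ, ∃ g : PontryaginDual Γ → Fin c → ℂ, MemDirectSumL2 lam c m g ∧
      (filterIsometry c H q)^[n] g =ᵐ[lam] f) :
    ∀ n : ℕ, 1 ≤ n → ∀ᵐ ω ∂lam,
      (∑ i : Fin c, ‖((filterAdjoint c N H q)^[n] f) ω i‖ ^ 2)
        = ((N : ℝ) ^ n)⁻¹ *
            ∑ᶠ ζ : {ζ : PontryaginDual Γ // q^[n] ζ = ω}, ∑ i : Fin c, ‖f ζ.1 i‖ ^ 2 := by
  let αc : Γ →ₜ* Γ := ⟨α, continuous_of_discreteTopology⟩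
  obtain rfl : q = PontryaginDual.map αc := funext fun ω => PontryaginDual.ext (hq ω)
  have : (αc : Γ →* Γ).range.FiniteIndex := ⟨show α.range.index ≠ 0 by omega⟩
  have hfin (ω : PontryaginDual Γ) : Finite {ζ // PontryaginDual.map αc ζ = ω} :=
    (MonoidHom.finite_preimage_singleton _ (PontryaginDual.finite_ker_map_s11 αc) ω).to_subtype
  have hnull (S : Set (PontryaginDual Γ)) : lam S = 0 → lam (PontryaginDual.map αc '' S) = 0 :=
    PontryaginDual.measure_image_map_eq_zero lam αc hα
  have hN' : (N : ℂ) ≠ 0 := by exact_mod_cast hN.ne'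
  intro n _
  obtain ⟨g, hg, hgf⟩ := hfint n
  filter_upwards [ae_filterAdjoint_iterate_filterIsometry_iterate hfin hnull hHsupp hHfilter hg.2.1
      hN' n,
    ae_finsum_fiber_iterate_norm_sq_filterIsometry_iterate hfin hnull hHsupp hHfilter hg.2.1 n,
    ae_forall_fiber_iterate hnull n hgf] with ω hadj hnorm hgf
  rw [filterAdjoint_iterate_congr n fun ζ hζ => (hgf ζ hζ).symm, hadj,
    finsum_congr fun ζ => by rw [← hgf ζ.1 ζ.2], hnorm,
    inv_mul_cancel_left₀ (pow_ne_zero _ (Nat.cast_ne_zero.2 hN.ne'))]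

theorem statement11
    {Γ : Type*} [CommGroup Γ] [Countable Γ] [TopologicalSpace Γ] [DiscreteTopology Γ]
    [MeasurableSpace (PontryaginDual Γ)] [BorelSpace (PontryaginDual Γ)]
    [CompactSpace (PontryaginDual Γ)]
    (lam : Measure (PontryaginDual Γ)) [lam.IsHaarMeasure] [IsProbabilityMeasure lam]
    (α : Γ →* Γ) (hα : Function.Injective α) (N : ℕ) (hN : 0 < N)
    (hidx : α.range.index = N)
    (q : PontryaginDual Γ → PontryaginDual Γ)
    (hq : ∀ (ω : PontryaginDual Γ) (γ : Γ), q ω γ = ω (α γ))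
    (hdense : Dense (⋃ n : ℕ, ⋃ _ : 1 ≤ n, {ω : PontryaginDual Γ | q^[n] ω = 1}))
    (c : ℕ) (m : PontryaginDual Γ → ℕ) (hm : Measurable m) (hmc : ∀ ω, m ω ≤ c)
    (H : PontryaginDual Γ → Matrix (Fin c) (Fin c) ℂ)
    (hHmeas : ∀ i j, Measurable fun ω => H ω i j)
    (hHsupp : ∀ (ω : PontryaginDual Γ) (i j : Fin c), m ω < (j : ℕ) + 1 → H ω i j = 0)
    (hHfilter : ∀ᵐ ω ∂lam,
      (∑ᶠ ζ : {ζ : PontryaginDual Γ // q ζ = ω}, H ζ.1 * (H ζ.1)ᴴ)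
        = (N : ℂ) • Matrix.diagonal
            (fun i : Fin c => if (i : ℕ) + 1 ≤ m ω then (1 : ℂ) else 0))
    -- `f` lies in `⋂_{n ≥ 0} S_Hⁿ(K)`
    (f : PontryaginDual Γ → Fin c → ℂ) (hf : MemDirectSumL2 lam c m f)
    (hfint : ∀ n : ℕ, ∃ g : PontryaginDual Γ → Fin c → ℂ, MemDirectSumL2 lam c m g ∧
      (filterIsometry c H q)^[n] g =ᵐ[lam] f) :
    ∀ n : ℕ, 1 ≤ n → ∀ᵐ ω ∂lam,
      (∑ i : Fin c, ‖((filterAdjoint c N H q)^[n] f) ω i‖ ^ 2)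
        = ((N : ℝ) ^ n)⁻¹ *
            ∑ᶠ ζ : {ζ : PontryaginDual Γ // q^[n] ζ = ω}, ∑ i : Fin c, ‖f ζ.1 i‖ ^ 2 :=
  statement11_general lam α hα N hN hidx q hq c m H hHsupp hHfilter f hfint
end
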